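/- Let d ≥ 2, ℓ ≥ 1, and k > d be integers. Let W be a set of k vertices, and for each (d−1)-element subset A of W and each j ∈ {1, …, ℓ}, let x_{A,j} be a new vertex, all these new vertices being pairwise distinct and not in W. Let H be the d-uniform hypergraph whose hyperedges are all d-element subsets of W together with all sets of the form A ∪ {x_{A,j}} for a (d−1)-element subset A of W and j ∈ {1, …, ℓ}. Then the number of vertices of H is k + ℓ·C(k, d−1), the dimension of H is d, and the dimension of the dual hypergraph H^d is k + ℓ − (d−1). -/

import Mathlib

/-!
Let `T` be a minimal transversal and `S = T ∩ W`. Every `d`-subset of `W` meets `S`, so at most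
`d - 1` vertices of `W` lie outside `S`, and every vertex of `T` has a private hyperedge, meeting
`T` in that vertex only. The only hyperedge through a new vertex `x_{A,j}` is `A ∪ {x_{A,j}}`, so
`x_{A,j} ∈ T` forces `A ⊆ W \ S`, hence `A = W \ S`: the new vertices of `T` all share one `A`,
and `|T| ≤ (k - (d - 1)) + ℓ`. If `T ⊆ W`, the private hyperedge of any `w ∈ S` contains at least
`d - 2` further vertices of `W`, all outside `S`, so `|T| ≤ k - (d - 2) ≤ k + ℓ - (d - 1)`.
Equality is attained by `(W \ A) ∪ {x_{A,1}, …, x_{A,ℓ}}` for any `(d - 1)`-subset `A` of `W`.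
-/

open Finset
open scoped Classical

variable {V : Type*} [Fintype V] [DecidableEq V]

/-- A hypergraph on vertex set `V` is given by its finite set of hyperedges `E`;
the condition that every vertex belongs to at least one hyperedge. -/
def Covers (E : Finset (Finset V)) : Prop := ∀ v : V, ∃ e ∈ E, v ∈ e

def SpernerHG (E : Finset (Finset V)) : Prop := ∀ e ∈ E, ∀ f ∈ E, e ⊆ f → e = f

def IsTransversal (E : Finset (Finset V)) (T : Finset V) : Prop := ∀ e ∈ E, (e ∩ T).Nonempty

def IsMinTransversal (E : Finset (Finset V)) (T : Finset V) : Prop :=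
  IsTransversal E T ∧ ∀ T' ⊆ T, IsTransversal E T' → T' = T

noncomputable def dualHG (E : Finset (Finset V)) : Finset (Finset V) :=
  Finset.univ.filter fun T => IsMinTransversal E T

def coocGraph (E : Finset (Finset V)) : SimpleGraph V where
  Adj u v := u ≠ v ∧ ∃ e ∈ E, u ∈ e ∧ v ∈ e
  symm := by
    constructor
    rintro u v ⟨huv, e, he, hu, hv⟩
    exact ⟨Ne.symm huv, e, he, hv, hu⟩
  loopless := by
    constructor
    rintro v ⟨hv, -⟩
    exact hv rfl

def IsMaxClique (G : SimpleGraph V) (C : Finset V) : Prop :=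
  G.IsClique (C : Set V) ∧ ∀ D : Finset V, G.IsClique (D : Set V) → C ⊆ D → D = C

def ConformalHG (E : Finset (Finset V)) : Prop :=
  ∀ C : Finset V, IsMaxClique (coocGraph E) C → C ∈ E

def DuallyConformalHG (E : Finset (Finset V)) : Prop :=
  ConformalHG (dualHG E)

def IsCliqueTransversal (G : SimpleGraph V) (X : Finset V) : Prop :=
  ∀ C : Finset V, IsMaxClique G C → (C ∩ X).Nonempty

def IsMinCliqueTransversal (G : SimpleGraph V) (X : Finset V) : Prop :=
  IsCliqueTransversal G X ∧ ∀ Y ⊆ X, IsCliqueTransversal G Y → Y = X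

/-- The upper clique transversal number. -/
noncomputable def uct (G : SimpleGraph V) : ℕ :=
  (Finset.univ.filter fun X : Finset V => IsMinCliqueTransversal G X).sup Finset.card

/-- The vertex set of the Gurvich–Makino construction: a set `W` of `k` vertices
together with `ℓ` new vertices for each `(d-1)`-subset `A` of `W`. -/
abbrev GMvertex (d ℓ k : ℕ) : Type :=
  Fin k ⊕ ({A : Finset (Fin k) // A.card = d - 1} × Fin ℓ)

/-- The hyperedges of the Gurvich–Makino construction: all `d`-subsets of `W`,
together with the sets `A ∪ {x_{A,j}}` for each `(d-1)`-subset `A` of `W` and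
each `j ∈ {1,…,ℓ}`. -/
def GMedges (d ℓ k : ℕ) : Finset (Finset (GMvertex d ℓ k)) :=
  ((Finset.powersetCard d (Finset.univ : Finset (Fin k))).image
      fun s => s.image (Sum.inl : Fin k → GMvertex d ℓ k)) ∪
  (Finset.univ.image
      fun p : {A : Finset (Fin k) // A.card = d - 1} × Fin ℓ =>
        insert (Sum.inr p : GMvertex d ℓ k)
          ((p.1 : Finset (Fin k)).image (Sum.inl : Fin k → GMvertex d ℓ k)))

theorem Finset.toLeft_image_inl {α β : Type*} [DecidableEq (α ⊕ β)] (s : Finset α) :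
    (s.image Sum.inl : Finset (α ⊕ β)).toLeft = s := by
  ext; simp

section Transversal

variable {α : Type*} [DecidableEq α] {E : Finset (Finset α)} {T : Finset α}

theorem isMinTransversal_iff_forall_exists_inter_eq_singleton :
    IsMinTransversal E T ↔ IsTransversal E T ∧ ∀ v ∈ T, ∃ e ∈ E, e ∩ T = {v} := by
  refine ⟨fun hT => ⟨hT.1, fun v hv => ?_⟩, fun ⟨hT, hpriv⟩ => ⟨hT, fun T' hT'T hT' => ?_⟩⟩
  · have hnot : ¬ IsTransversal E (T.erase v) := fun h =>
      notMem_erase v T (by rwa [hT.2 _ (erase_subset v T) h])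
    obtain ⟨e, he, hempty⟩ := not_forall₂.1 hnot
    have hsub : e ∩ T ⊆ {v} := fun u hu => by
      by_contra huv
      obtain ⟨hue, huT⟩ := mem_inter.1 hu
      exact hempty ⟨u, mem_inter.2 ⟨hue, mem_erase.2 ⟨notMem_singleton.1 huv, huT⟩⟩⟩
    exact ⟨e, he, (Nonempty.subset_singleton_iff (hT.1 e he)).1 hsub⟩
  · refine hT'T.antisymm fun v hv => ?_
    obtain ⟨e, he, hev⟩ := hpriv v hv
    obtain ⟨u, hu⟩ := hT' e he
    have huv : u ∈ e ∩ T := inter_subset_inter_left hT'T hu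
    rw [hev, mem_singleton] at huv
    exact huv ▸ (mem_inter.1 hu).2

theorem mem_dualHG [Fintype α] : T ∈ dualHG E ↔ IsMinTransversal E T := by
  simp [dualHG]

end Transversal

namespace GurvichMakino

variable {d ℓ k : ℕ}

theorem mem_GMedges {e : Finset (GMvertex d ℓ k)} :
    e ∈ GMedges d ℓ k ↔
      (∃ s : Finset (Fin k), #s = d ∧ s.image Sum.inl = e) ∨
      ∃ p, insert (Sum.inr p) (p.1.1.image Sum.inl) = e := by
  simp [GMedges]

theorem image_inl_mem_GMedges {s : Finset (Fin k)} (hs : #s = d) :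
    s.image Sum.inl ∈ GMedges d ℓ k :=
  mem_GMedges.2 (Or.inl ⟨s, hs, rfl⟩)

theorem insert_inr_mem_GMedges (p : {A : Finset (Fin k) // #A = d - 1} × Fin ℓ) :
    insert (Sum.inr p) (p.1.1.image Sum.inl) ∈ GMedges d ℓ k :=
  mem_GMedges.2 (Or.inr ⟨p, rfl⟩)

theorem card_of_mem_GMedges (hd : 1 ≤ d) {e : Finset (GMvertex d ℓ k)}
    (he : e ∈ GMedges d ℓ k) : #e = d := by
  rcases mem_GMedges.1 he with ⟨s, hs, rfl⟩ | ⟨p, rfl⟩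
  · rw [card_image_of_injective s Sum.inl_injective, hs]
  · rw [card_insert_of_notMem (by simp), card_image_of_injective _ Sum.inl_injective, p.1.2]
    omega

theorem le_card_toLeft_of_mem_GMedges {e : Finset (GMvertex d ℓ k)} (he : e ∈ GMedges d ℓ k) :
    d - 1 ≤ #e.toLeft := by
  rcases mem_GMedges.1 he with ⟨s, hs, rfl⟩ | ⟨p, rfl⟩
  · simp [toLeft_image_inl, hs]
  · simp [toLeft_image_inl, p.1.2]

theorem eq_of_inr_mem_of_mem_GMedges {e : Finset (GMvertex d ℓ k)} (he : e ∈ GMedges d ℓ k)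
    {p : {A : Finset (Fin k) // #A = d - 1} × Fin ℓ} (hp : Sum.inr p ∈ e) :
    e = insert (Sum.inr p) (p.1.1.image Sum.inl) := by
  rcases mem_GMedges.1 he with ⟨s, -, rfl⟩ | ⟨q, rfl⟩
  · simp at hp
  · obtain rfl : p = q := by simpa using hp
    rfl

section UpperBound

variable {T : Finset (GMvertex d ℓ k)}

theorem card_compl_toLeft_le (hT : IsTransversal (GMedges d ℓ k) T) : #T.toLeftᶜ ≤ d - 1 := by
  by_contra! h
  obtain ⟨s, hsS, hs⟩ := exists_subset_card_eq (show d ≤ #T.toLeftᶜ by omega)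
  obtain ⟨v, hv⟩ := hT _ (image_inl_mem_GMedges (ℓ := ℓ) hs)
  obtain ⟨hvs, hvT⟩ := mem_inter.1 hv
  obtain ⟨w, hws, rfl⟩ := mem_image.1 hvs
  exact mem_compl.1 (hsS hws) (mem_toLeft.2 hvT)

theorem compl_toLeft_eq_of_mem_toRight (hT : IsMinTransversal (GMedges d ℓ k) T)
    {p : {A : Finset (Fin k) // #A = d - 1} × Fin ℓ} (hp : p ∈ T.toRight) :
    T.toLeftᶜ = p.1.1 := by
  obtain ⟨e, he, heT⟩ :=
    (isMinTransversal_iff_forall_exists_inter_eq_singleton.1 hT).2 _ (mem_toRight.1 hp)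
  have hpe : Sum.inr p ∈ e := (mem_inter.1 (heT ▸ mem_singleton_self _)).1
  have hsub : p.1.1 ⊆ T.toLeftᶜ := fun w hw => mem_compl.2 fun hwT => by
    have hwe : Sum.inl w ∈ e := by
      rw [eq_of_inr_mem_of_mem_GMedges he hpe]
      exact mem_insert_of_mem (mem_image_of_mem _ hw)
    have : Sum.inl w ∈ e ∩ T := mem_inter.2 ⟨hwe, mem_toLeft.1 hwT⟩
    simp [heT] at this
  exact (eq_of_subset_of_card_le hsub (by rw [p.1.2]; exact card_compl_toLeft_le hT.1)).symm

theorem card_toRight_le (hT : IsMinTransversal (GMedges d ℓ k) T) : #T.toRight ≤ ℓ := by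
  rcases T.toRight.eq_empty_or_nonempty with h | ⟨p, hp⟩
  · simp [h]
  calc #T.toRight ≤ #({p.1} ×ˢ (univ : Finset (Fin ℓ))) := card_le_card fun q hq =>
        mem_product.2 ⟨mem_singleton.2 <| Subtype.ext <|
          (compl_toLeft_eq_of_mem_toRight hT hq).symm.trans
            (compl_toLeft_eq_of_mem_toRight hT hp), mem_univ _⟩
    _ = ℓ := by simp

theorem sub_two_le_card_compl_toLeft (hT : IsMinTransversal (GMedges d ℓ k) T) {w : Fin k}
    (hw : w ∈ T.toLeft) : d - 2 ≤ #T.toLeftᶜ := by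
  obtain ⟨e, he, heT⟩ :=
    (isMinTransversal_iff_forall_exists_inter_eq_singleton.1 hT).2 _ (mem_toLeft.1 hw)
  have hsub : e.toLeft.erase w ⊆ T.toLeftᶜ := fun u hu => by
    obtain ⟨huw, hue⟩ := mem_erase.1 hu
    refine mem_compl.2 fun huT => huw ?_
    have : Sum.inl u ∈ e ∩ T := mem_inter.2 ⟨mem_toLeft.1 hue, mem_toLeft.1 huT⟩
    simpa [heT] using this
  have := card_le_card hsub
  have := le_card_toLeft_of_mem_GMedges he
  have := pred_card_le_card_erase (s := e.toLeft) (a := w)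
  omega

theorem card_le_of_isMinTransversal (hℓ : 1 ≤ ℓ) (hT : IsMinTransversal (GMedges d ℓ k) T) :
    #T ≤ k + ℓ - (d - 1) := by
  have hk : #T.toLeft + #T.toLeftᶜ = k := by rw [card_add_card_compl, Fintype.card_fin]
  rw [← card_toLeft_add_card_toRight]
  rcases T.toRight.eq_empty_or_nonempty with hX | ⟨p, hp⟩
  · rcases T.toLeft.eq_empty_or_nonempty with hS | ⟨w, hw⟩
    · simp [hS, hX]
    · have := sub_two_le_card_compl_toLeft hT hw
      rw [hX, card_empty]
      omega
  · have hS : #T.toLeftᶜ = d - 1 := by rw [compl_toLeft_eq_of_mem_toRight hT hp, p.1.2]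
    have := card_toRight_le hT
    omega

end UpperBound

def extremalTransversal (A : {A : Finset (Fin k) // #A = d - 1}) : Finset (GMvertex d ℓ k) :=
  A.1ᶜ.disjSum ({A} ×ˢ univ)

theorem card_extremalTransversal (A : {A : Finset (Fin k) // #A = d - 1}) :
    #(extremalTransversal (ℓ := ℓ) A) = k - (d - 1) + ℓ := by
  simp [extremalTransversal, card_compl, A.2]

theorem isMinTransversal_extremalTransversal (hd : 1 ≤ d)
    (A : {A : Finset (Fin k) // #A = d - 1}) :
    IsMinTransversal (GMedges d ℓ k) (extremalTransversal A) := by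
  refine isMinTransversal_iff_forall_exists_inter_eq_singleton.2 ⟨fun e he => ?_, ?_⟩
  · rcases mem_GMedges.1 he with ⟨s, hs, rfl⟩ | ⟨p, rfl⟩
    · obtain ⟨w, hws, hwA⟩ := not_subset.1 fun h : s ⊆ A.1 => by
        have := card_le_card h
        omega
      exact ⟨Sum.inl w, by simp [extremalTransversal, hws, hwA]⟩
    · by_cases hpA : p.1 = A
      · subst hpA
        exact ⟨Sum.inr p, by simp [extremalTransversal]⟩
      · obtain ⟨w, hwp, hwA⟩ := not_subset.1 fun h : p.1.1 ⊆ A.1 =>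
          hpA (Subtype.ext (eq_of_subset_of_card_le h (by rw [A.2, p.1.2])))
        exact ⟨Sum.inl w, by simp [extremalTransversal, hwp, hwA]⟩
  · rintro (w | p) hv
    · have hwA : w ∉ A.1 := by simpa [extremalTransversal] using hv
      refine ⟨(insert w A.1).image Sum.inl, image_inl_mem_GMedges ?_, ?_⟩
      · rw [card_insert_of_notMem hwA, A.2]
        omega
      ext (u | q)
      · simp only [image_insert, extremalTransversal, singleton_product, mem_inter, mem_insert,
          Sum.inl.injEq, mem_image, exists_eq_right, inl_mem_disjSum, mem_compl, mem_singleton]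
        exact ⟨fun ⟨h, h'⟩ => h.resolve_right h', by rintro rfl; exact ⟨Or.inl rfl, hwA⟩⟩
      · simp
    · obtain ⟨j, rfl⟩ : ∃ j, (A, j) = p := by simpa [extremalTransversal] using hv
      refine ⟨_, insert_inr_mem_GMedges (A, j), ?_⟩
      ext (u | q) <;> simp [extremalTransversal]

end GurvichMakino

/-- For `d ≥ 2`, `ℓ ≥ 1`, `k > d`, the Gurvich–Makino hypergraph has
`k + ℓ·C(k, d-1)` vertices, dimension `d`, and its dual has dimension
`k + ℓ - (d-1)`. -/
theorem gurvich_makino (d ℓ k : ℕ) (hd : 2 ≤ d) (hl : 1 ≤ ℓ) (hk : d < k) :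
    Fintype.card (GMvertex d ℓ k) = k + ℓ * Nat.choose k (d - 1) ∧
    (GMedges d ℓ k).sup Finset.card = d ∧
    (dualHG (GMedges d ℓ k)).sup Finset.card = k + ℓ - (d - 1) := by
  open GurvichMakino in
  refine ⟨?_, ?_, ?_⟩
  · rw [Fintype.card_sum, Fintype.card_prod,
      Fintype.card_of_subtype _ fun _ => mem_powersetCard_univ, card_powersetCard]
    simp [mul_comm]
  · obtain ⟨s, -, hs⟩ := exists_subset_card_eq (s := (univ : Finset (Fin k))) (n := d)
      (by rw [card_univ, Fintype.card_fin]; omega)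
    exact (sup_congr rfl fun e he => card_of_mem_GMedges (by omega) he).trans
      (sup_const ⟨_, image_inl_mem_GMedges hs⟩ d)
  · obtain ⟨A, -, hA⟩ := exists_subset_card_eq (s := (univ : Finset (Fin k))) (n := d - 1)
      (by rw [card_univ, Fintype.card_fin]; omega)
    refine le_antisymm
      (Finset.sup_le fun T hT => card_le_of_isMinTransversal hl (mem_dualHG.1 hT)) ?_
    calc k + ℓ - (d - 1) = #(extremalTransversal ⟨A, hA⟩) := by
          rw [card_extremalTransversal]; omega
      _ ≤ _ := le_sup (mem_dualHG.2 (isMinTransversal_extremalTransversal (by omega) _))
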